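/- arXiv:1312.6412 — 2 statements merged into one kernel-verified Lean document; each statement's English description precedes it below -/
import Mathlib

section
/- For all nonnegative integers k₀, k₁, k₂ with k₀+k₁+k₂ = k and every integer t ≥ k+1: R²_{−1,t} · x_{α₁}(−1)^{k₁} · x_{α₁+α₂}(−1)^{k₂} ∈ I_{k₂Λ₀+k₀Λ₁+k₁Λ₂}. -/
/- Setup: the nilpotent subalgebra 𝔫 ⊂ 𝔰𝔩(3,ℂ) spanned by E₁₂, E₂₃, E₁₃, its loop
algebra 𝔫̄ = 𝔫 ⊗ ℂ[t,t⁻¹], and the universal enveloping algebra U(𝔫̄). -/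

noncomputable section
open scoped TensorProduct
attribute [local instance 100] LieRing.ofAssociativeRing

namespace PrincipalSubspaceSL3

/-- 3×3 complex matrices. -/
abbrev gl3 : Type := Matrix (Fin 3) (Fin 3) ℂ

/-- The root vectors: `Egen 0 = x_{α₁} = E₁₂`, `Egen 1 = x_{α₂} = E₂₃`,
`Egen 2 = x_{α₁+α₂} = E₁₃`. -/
def Egen : Fin 3 → gl3
  | 0 => Matrix.single 0 1 1
  | 1 => Matrix.single 1 2 1
  | 2 => Matrix.single 0 2 1

lemma egen_lie_mem :
    ∀ x ∈ Submodule.span ℂ (Set.range Egen), ∀ y ∈ Submodule.span ℂ (Set.range Egen),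
      ⁅x, y⁆ ∈ Submodule.span ℂ (Set.range Egen) := by
  have key : ∀ a b : Fin 3, ⁅Egen a, Egen b⁆ ∈ Submodule.span ℂ (Set.range Egen) := by
    intro a b
    fin_cases a <;> fin_cases b <;>
      simp only [Egen, Ring.lie_def, Matrix.single_mul_single_same,
        Matrix.single_mul_single_of_ne, Fin.reduceEq, ne_eq, not_false_eq_true,
        one_mul, sub_zero, zero_sub, sub_self] <;>
      first
        | exact Submodule.zero_mem _
        | exact Submodule.subset_span ⟨2, rfl⟩
        | exact Submodule.neg_mem _ (Submodule.subset_span ⟨2, rfl⟩)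
  intro x hx
  induction hx using Submodule.span_induction with
  | mem x hxs =>
      obtain ⟨a, rfl⟩ := hxs
      intro y hy
      induction hy using Submodule.span_induction with
      | mem y hys => obtain ⟨b, rfl⟩ := hys; exact key a b
      | zero => simp
      | add y z hy hz hy' hz_left => rw [lie_add]; exact Submodule.add_mem _ hy' hz_left
      | smul c y hy hy' => rw [lie_smul]; exact Submodule.smul_mem _ _ hy'
  | zero => intro y hy; simp
  | add x z hx hz hx' hz_left =>
      intro y hy; rw [add_lie]; exact Submodule.add_mem _ (hx' y hy) (hz_left y hy)
  | smul c x hx hx' =>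
      intro y hy; rw [smul_lie]; exact Submodule.smul_mem _ _ (hx' y hy)

/-- The nilpotent Lie subalgebra 𝔫 = ℂE₁₂ ⊕ ℂE₂₃ ⊕ ℂE₁₃ of 𝔰𝔩(3,ℂ). -/
def nn : LieSubalgebra ℂ gl3 :=
  { Submodule.span ℂ (Set.range Egen) with
    lie_mem' := fun {x y} hx hy => egen_lie_mem x hx y hy }

/-- Laurent polynomials ℂ[t, t⁻¹]. -/
abbrev A : Type := LaurentPolynomial ℂ

/-- The loop algebra 𝔫̄ = 𝔫 ⊗ ℂ[t,t⁻¹]. -/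
abbrev nbar : Type := A ⊗[ℂ] nn

set_option synthInstance.maxHeartbeats 1000000 in
instance : LieAlgebra ℂ nbar where
  lie_smul c x y := by
    have h := lie_smul (algebraMap ℂ A c) x y
    rwa [algebraMap_smul, algebraMap_smul] at h

/-- The root vectors as elements of 𝔫. -/
def en (i : Fin 3) : nn := ⟨Egen i, Submodule.subset_span ⟨i, rfl⟩⟩

/-- `nx i m` is the element x_{α}(m) = x_α ⊗ tᵐ of 𝔫̄, where α is α₁, α₂, α₁+α₂
according to i = 0, 1, 2. -/
def nx (i : Fin 3) (m : ℤ) : nbar := LaurentPolynomial.T m ⊗ₜ[ℂ] en i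

/-- The universal enveloping algebra U(𝔫̄). -/
abbrev U : Type := UniversalEnvelopingAlgebra ℂ nbar

/-- `xg i m` is the element x_α(m) regarded inside U(𝔫̄). -/
def xg (i : Fin 3) (m : ℤ) : U := UniversalEnvelopingAlgebra.ι ℂ (nx i m)

/-- `Rtr k i t` = R^i_{-1,t} : the sum of x_{α_i}(m₁)⋯x_{α_i}(m_{k+1}) over all integer
tuples with every m_j ≤ -1 and m₁+⋯+m_{k+1} = -t (parametrized by m_j = -1 - n_j with
n : Fin (k+1) → ℕ, ∑ n = t - (k+1)).  Here i : Fin 2 refers to the simple root α_{i+1}. -/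
def Rtr (k : ℕ) (i : Fin 2) (t : ℤ) : U :=
  ∑ f ∈ Finset.Nat.antidiagonalTuple (k + 1) (t - (k + 1)).toNat,
    (List.ofFn fun j : Fin (k + 1) => xg i.castSucc (-1 - (f j : ℤ))).prod

/-- The left ideal J = Σ_{i,t≥k+1} U(𝔫̄)·R^i_{-1,t}. -/
def Jid (k : ℕ) : Submodule U U :=
  Submodule.span U {u : U | ∃ i : Fin 2, ∃ t : ℤ, (k : ℤ) + 1 ≤ t ∧ u = Rtr k i t}

/-- The left ideal U(𝔫̄)·𝔫̄₊, generated by the x_α(m) with m ≥ 0. -/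
def nplusIdeal : Submodule U U :=
  Submodule.span U {u : U | ∃ i : Fin 3, ∃ m : ℤ, 0 ≤ m ∧ u = xg i m}

/-- The left ideal I_{kΛ₀} = J + U(𝔫̄)·𝔫̄₊. -/
def IkL0 (k : ℕ) : Submodule U U := Jid k ⊔ nplusIdeal

/-- The left ideal I_{k₀Λ₀+k₁Λ₁+k₂Λ₂} = I_{kΛ₀} + U·x_{α₁}(-1)^{k₀+k₂+1}
+ U·x_{α₂}(-1)^{k₀+k₁+1} + U·x_{α₁+α₂}(-1)^{k₀+1} (with k = k₀+k₁+k₂). -/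
def Iwt (k k0 k1 k2 : ℕ) : Submodule U U :=
  IkL0 k ⊔ Submodule.span U {xg 0 (-1) ^ (k0 + k2 + 1)}
    ⊔ Submodule.span U {xg 1 (-1) ^ (k0 + k1 + 1)}
    ⊔ Submodule.span U {xg 2 (-1) ^ (k0 + 1)}


end PrincipalSubspaceSL3

/-! Let `F = Σₐ x_{α₂}(-1-a) zᵃ` and `Hₚ = Σₐ x_{α₁+α₂}(p-1-a) zᵃ` in `U(𝔫̄)⟦z⟧`, so that the
coefficient of `z^N` in `Fⁿ` is the `n`-factor sum `R_{-1,n+N}`. Since `[x_{α₁}(p), F] = Hₚ`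
commutes with `F`, we get `[x_{α₁}(p), F^{n+1}] = (n+1) Hₚ Fⁿ`, and `H₀ = x_{α₁+α₂}(-1) + z H₋₁`
turns this into
  `R_t x_{α₁}(-1) = x_{α₁}(-1) R_t + (n+1) x_{α₁+α₂}(-1) R'_t`
  `                 + R_{t+1} x_{α₁}(0) - x_{α₁}(0) R_{t+1}`,
where `R` has `n+1` factors and `R'` has `n`. Moving the factors `x_{α₁}(-1)` across `R_t` one at
a time, the first and last terms are handled by induction, the third ends in `x_{α₁}(0) ∈ 𝔫̄₊`,
and the second carries one more factor of the central element `x_{α₁+α₂}(-1)`, hence lies in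
`U(𝔫̄)·x_{α₁+α₂}(-1)^{k₂+1}`. -/

theorem Finset.Nat.sum_antidiagonalTuple_succ {M : Type*} [AddCommMonoid M] (n N : ℕ)
    (F : (Fin (n + 1) → ℕ) → M) :
    ∑ x ∈ antidiagonalTuple (n + 1) N, F x =
      ∑ p ∈ antidiagonal N, ∑ x ∈ antidiagonalTuple n p.2, F (Fin.cons p.1 x) := by
  rw [Finset.sum_sigma']
  refine Finset.sum_nbij' (fun x => ⟨(x 0, N - x 0), Fin.tail x⟩)
    (fun y : (_ : ℕ × ℕ) × (Fin n → ℕ) => Fin.cons y.1.1 y.2) ?_ ?_ (fun _ _ => by simp) ?_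
    (fun _ _ => by simp)
  · intro x hx
    simp only [Finset.Nat.mem_antidiagonalTuple, Fin.sum_univ_succ] at hx
    simp [Finset.Nat.mem_antidiagonalTuple, Fin.tail, ← hx]
  · rintro ⟨p, y⟩ hy
    rw [Finset.mem_sigma, Finset.HasAntidiagonal.mem_antidiagonal,
      Finset.Nat.mem_antidiagonalTuple] at hy
    simp [Finset.Nat.mem_antidiagonalTuple, Fin.sum_univ_succ, hy]
  · rintro ⟨p, y⟩ hy
    rw [Finset.mem_sigma, Finset.HasAntidiagonal.mem_antidiagonal,
      Finset.Nat.mem_antidiagonalTuple] at hy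
    simp [← hy.1]

namespace PowerSeries

variable {R : Type*}

theorem coeff_mk_pow [Semiring R] (g : ℕ → R) (n N : ℕ) :
    coeff N (mk g ^ n) =
      ∑ x ∈ Finset.Nat.antidiagonalTuple n N, (List.ofFn fun j => g (x j)).prod := by
  induction n generalizing N with
  | zero => cases N <;> simp [coeff_one]
  | succ n ih =>
    rw [pow_succ', coeff_mul, Finset.Nat.sum_antidiagonalTuple_succ]
    refine Finset.sum_congr rfl fun p _ => ?_
    simp [ih, Finset.mul_sum, List.ofFn_succ]

theorem commute_of_forall_coeff [Semiring R] {φ ψ : R⟦X⟧}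
    (h : ∀ i j, Commute (coeff i φ) (coeff j ψ)) : Commute φ ψ := by
  ext n
  rw [coeff_mul, coeff_mul, ← Finset.Nat.sum_antidiagonal_swap]
  exact Finset.sum_congr rfl fun p _ => (h p.2 p.1).eq

theorem commute_C_iff [Semiring R] {a : R} {φ : R⟦X⟧} :
    Commute (C a) φ ↔ ∀ n, Commute a (coeff n φ) := by
  simp only [Commute, SemiconjBy, PowerSeries.ext_iff, coeff_C_mul, coeff_mul_C]

theorem coeff_lie_C [Ring R] (n : ℕ) (a : R) (φ : R⟦X⟧) :
    coeff n ⁅C a, φ⁆ = ⁅a, coeff n φ⁆ := by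
  simp only [Ring.lie_def, map_sub, coeff_C_mul, coeff_mul_C]

end PowerSeries

theorem lie_pow_succ_of_commute {R : Type*} [Ring R] {a b : R} (h : Commute ⁅a, b⁆ b) (n : ℕ) :
    ⁅a, b ^ (n + 1)⁆ = (n + 1) • (⁅a, b⁆ * b ^ n) := by
  induction n with
  | zero => simp
  | succ n ih =>
    have hlie : ⁅a, b ^ (n + 2)⁆ = ⁅a, b ^ (n + 1)⁆ * b + b ^ (n + 1) * ⁅a, b⁆ := by
      simp only [Ring.lie_def, pow_succ]; noncomm_ring
    rw [hlie, ih, (h.pow_right (n + 1)).eq.symm, smul_mul_assoc, mul_assoc, ← pow_succ,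
      ← succ_nsmul]

namespace PrincipalSubspaceSL3

open PowerSeries

theorem lie_en_zero_one : ⁅en 0, en 1⁆ = en 2 := by
  ext1
  show ⁅Egen 0, Egen 1⁆ = Egen 2
  ext i j
  fin_cases i <;> fin_cases j <;> simp [Egen, Ring.lie_def]

theorem lie_en_two (i : Fin 3) : ⁅en 2, en i⁆ = 0 := by
  ext1
  show ⁅Egen 2, Egen i⁆ = 0
  ext a b
  fin_cases i <;> fin_cases a <;> fin_cases b <;> simp [Egen, Ring.lie_def]

theorem lie_xg (i j : Fin 3) (p q : ℤ) :
    ⁅xg i p, xg j q⁆ =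
      UniversalEnvelopingAlgebra.ι ℂ ((LaurentPolynomial.T (p + q) : A) ⊗ₜ[ℂ] ⁅en i, en j⁆) := by
  rw [xg, xg, ← LieHom.map_lie, nx, nx, LieAlgebra.ExtendScalars.bracket_tmul,
    ← LaurentPolynomial.T_add]

theorem lie_xg_zero_one (p q : ℤ) : ⁅xg 0 p, xg 1 q⁆ = xg 2 (p + q) := by
  rw [lie_xg, lie_en_zero_one]
  rfl

theorem commute_xg_two (a : ℤ) (i : Fin 3) (m : ℤ) : Commute (xg 2 a) (xg i m) := by
  rw [commute_iff_lie_eq, lie_xg, lie_en_two, TensorProduct.tmul_zero, map_zero]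

theorem commute_xg_zero (p q : ℤ) : Commute (xg 0 p) (xg 0 q) := by
  rw [commute_iff_lie_eq, lie_xg, lie_self, TensorProduct.tmul_zero, map_zero]

def modeSeries (i : Fin 3) (p : ℤ) : U⟦X⟧ := mk fun a => xg i (p - a)

theorem lie_C_xg_zero_modeSeries_one (p q : ℤ) :
    ⁅C (xg 0 p), modeSeries 1 q⁆ = modeSeries 2 (p + q) := by
  ext a
  rw [coeff_lie_C, modeSeries, modeSeries, coeff_mk, coeff_mk, lie_xg_zero_one, add_sub_assoc]

theorem commute_modeSeries_two (p : ℤ) (i : Fin 3) (q : ℤ) :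
    Commute (modeSeries 2 p) (modeSeries i q) :=
  commute_of_forall_coeff fun _ _ => by
    simpa only [modeSeries, coeff_mk] using commute_xg_two _ _ _

theorem modeSeries_eq_C_add_X_mul (i : Fin 3) (p : ℤ) :
    modeSeries i p = C (xg i p) + X * modeSeries i (p - 1) := by
  ext (_ | a)
  · simp [modeSeries]
  · simp [modeSeries, coeff_succ_X_mul]
    ring_nf

theorem lie_C_xg_zero_modeSeries_one_pow (p q : ℤ) (n : ℕ) :
    ⁅C (xg 0 p), modeSeries 1 q ^ (n + 1)⁆ =
      (n + 1) • (modeSeries 2 (p + q) * modeSeries 1 q ^ n) := by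
  have h := lie_C_xg_zero_modeSeries_one p q
  rw [lie_pow_succ_of_commute (h ▸ commute_modeSeries_two _ _ _), h]

/-- `R²_{-1,n+N}` with `n` factors, i.e. `Rtr (n - 1) 1 (n + N)` for `n ≥ 1`. -/
def rel2 (n N : ℕ) : U := coeff N (modeSeries 1 (-1) ^ n)

theorem Rtr_one_eq_rel2 (k : ℕ) (t : ℤ) : Rtr k 1 t = rel2 (k + 1) (t - (k + 1)).toNat := by
  rw [rel2, modeSeries, coeff_mk_pow]
  rfl

theorem rel2_succ_mul_xg_zero_neg_one (n N : ℕ) :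
    rel2 (n + 1) N * xg 0 (-1) = xg 0 (-1) * rel2 (n + 1) N
      + (n + 1) • (xg 2 (-1) * rel2 n (N + 1))
      + (rel2 (n + 1) (N + 1) * xg 0 0 - xg 0 0 * rel2 (n + 1) (N + 1)) := by
  have hseries : ⁅C (xg 0 0), modeSeries 1 (-1) ^ (n + 1)⁆ =
      (n + 1) • (C (xg 2 (-1)) * modeSeries 1 (-1) ^ n)
        + X * ⁅C (xg 0 (-1)), modeSeries 1 (-1) ^ (n + 1)⁆ := by
    rw [lie_C_xg_zero_modeSeries_one_pow, lie_C_xg_zero_modeSeries_one_pow,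
      modeSeries_eq_C_add_X_mul 2, add_mul, smul_add, mul_smul_comm, mul_assoc]
    norm_num
  have h := congrArg (coeff (N + 1)) hseries
  rw [coeff_lie_C, map_add, map_nsmul, coeff_C_mul, coeff_succ_X_mul, coeff_lie_C,
    Ring.lie_def, Ring.lie_def, ← sub_eq_zero] at h
  rw [← sub_eq_zero, rel2, rel2, rel2, ← h]
  abel

theorem commute_xg_two_rel2 (a : ℤ) (n N : ℕ) : Commute (xg 2 a) (rel2 n N) :=
  commute_C_iff.mp ((commute_C_iff.mpr fun _ => by
    simpa only [modeSeries, coeff_mk] using commute_xg_two _ _ _).pow_right n) N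

theorem rel2_mul_xg_pow_mem {I : Submodule U U} {n c : ℕ} (hR : ∀ N, rel2 (n + 1) N ∈ I)
    (he : xg 0 0 ∈ I) (hz : xg 2 (-1) ^ (c + 1) ∈ I) (m N : ℕ) :
    rel2 (n + 1) N * xg 0 (-1) ^ m * xg 2 (-1) ^ c ∈ I := by
  induction m generalizing N with
  | zero =>
    rw [pow_zero, mul_one, ← ((commute_xg_two_rel2 _ _ _).pow_left c).eq]
    exact I.smul_mem _ (hR N)
  | succ m ih =>
    have hz_left : xg 2 (-1) * (rel2 n (N + 1) * (xg 0 (-1) ^ m * xg 2 (-1) ^ c)) =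
        rel2 n (N + 1) * (xg 0 (-1) ^ m * xg 2 (-1) ^ (c + 1)) := by
      rw [(commute_xg_two_rel2 _ _ _).left_comm, ((commute_xg_two _ _ _).pow_right m).left_comm,
        ← pow_succ']
    have he_right : xg 0 0 * (xg 0 (-1) ^ m * xg 2 (-1) ^ c) =
        xg 0 (-1) ^ m * (xg 2 (-1) ^ c * xg 0 0) := by
      rw [((commute_xg_zero _ _).pow_right m).left_comm,
        (((commute_xg_two _ _ _).pow_left c).symm).eq]
    have hsplit : rel2 (n + 1) N * xg 0 (-1) ^ (m + 1) * xg 2 (-1) ^ c =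
        xg 0 (-1) * (rel2 (n + 1) N * xg 0 (-1) ^ m * xg 2 (-1) ^ c)
          + (n + 1) • (rel2 n (N + 1) * xg 0 (-1) ^ m * xg 2 (-1) ^ (c + 1))
          + ((rel2 (n + 1) (N + 1) * xg 0 (-1) ^ m * xg 2 (-1) ^ c) * xg 0 0
            - xg 0 0 * (rel2 (n + 1) (N + 1) * xg 0 (-1) ^ m * xg 2 (-1) ^ c)) := by
      rw [pow_succ', ← mul_assoc (rel2 _ _), rel2_succ_mul_xg_zero_neg_one]
      simp only [add_mul, sub_mul, smul_mul_assoc, mul_assoc, hz_left, he_right]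
    rw [hsplit]
    refine add_mem (add_mem (I.smul_mem _ (ih N)) (nsmul_mem ?_ _))
      (sub_mem (I.smul_mem _ he) (I.smul_mem _ (ih (N + 1))))
    exact I.smul_mem _ hz

theorem statement11_general (k : ℕ) (k0 k1 k2 : ℕ) (t : ℤ) :
    Rtr k 1 t * xg 0 (-1) ^ k1 * xg 2 (-1) ^ k2 ∈ Iwt k k2 k0 k1 := by
  have hIkL0 : IkL0 k ≤ Iwt k k2 k0 k1 := le_sup_left.trans (le_sup_left.trans le_sup_left)
  have hR (N : ℕ) : rel2 (k + 1) N ∈ Jid k := by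
    refine Submodule.subset_span ⟨1, N + k + 1, by omega, ?_⟩
    rw [Rtr_one_eq_rel2]
    congr
    omega
  have he : xg 0 0 ∈ nplusIdeal := Submodule.subset_span ⟨0, 0, le_rfl, rfl⟩
  rw [Rtr_one_eq_rel2]
  exact rel2_mul_xg_pow_mem (fun N => hIkL0 (Submodule.mem_sup_left (hR N)))
    (hIkL0 (Submodule.mem_sup_right he))
    (Submodule.mem_sup_right (Submodule.mem_span_singleton_self _)) _ _

/-- for k₀+k₁+k₂ = k and t ≥ k+1,
R²_{−1,t}·x_{α₁}(−1)^{k₁}·x_{α₁+α₂}(−1)^{k₂} ∈ I_{k₂Λ₀+k₀Λ₁+k₁Λ₂}. -/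
theorem statement11 (k : ℕ) (hk : 0 < k) (k0 k1 k2 : ℕ) (hsum : k0 + k1 + k2 = k)
    (t : ℤ) (ht : (k : ℤ) + 1 ≤ t) :
    Rtr k 1 t * xg 0 (-1) ^ k1 * xg 2 (-1) ^ k2 ∈ Iwt k k2 k0 k1 :=
  statement11_general k k0 k1 k2 t

end PrincipalSubspaceSL3
end
end

section
/- For every natural number k₁: x_{α₂}(0)^{k₁+1} · x_{α₁}(−1)^{k₁} ∈ U(𝔫̄)·𝔫̄₊, the left ideal of U(𝔫̄) generated by 𝔫̄₊ = 𝔫 ⊗ ℂ[t]. -/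
/- Setup: the nilpotent subalgebra 𝔫 ⊂ 𝔰𝔩(3,ℂ) spanned by E₁₂, E₂₃, E₁₃, its loop
algebra 𝔫̄ = 𝔫 ⊗ ℂ[t,t⁻¹], and the universal enveloping algebra U(𝔫̄). -/

noncomputable section
open scoped TensorProduct

namespace PrincipalSubspaceSL3

attribute [local instance 100] LieRing.ofAssociativeRing

/-! In any ring, if `e * a = a * e - c` with `c` commuting with `e`, then moving `e ^ n` past `a`
costs only `n • c * e ^ (n - 1)`, a term that still carries a power of `e`. Hence if `e` lies in a
left ideal, so does `e ^ n * a ^ k` whenever `n > k`: each factor `a` eats at most one `e`.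
Here `e = x_{α₂}(0) ∈ 𝔫̄₊`, `a = x_{α₁}(-1)` and `c = x_{α₁+α₂}(-1)`, which is central. -/

section CommutatorPowers

variable {R : Type*} [Ring R] {e a c : R}

theorem pow_succ_mul_of_mul_eq_sub (hea : e * a = a * e - c) (hec : Commute e c) (n : ℕ) :
    e ^ (n + 1) * a = a * e ^ (n + 1) - (n + 1) • (c * e ^ n) := by
  induction n with
  | zero => simpa using hea
  | succ n ih =>
    calc e ^ (n + 2) * a = e * (e ^ (n + 1) * a) := by rw [pow_succ' e (n + 1), mul_assoc]
      _ = e * a * e ^ (n + 1) - (n + 1) • (e * c * e ^ n) := by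
        rw [ih, mul_sub, mul_smul_comm, mul_assoc, mul_assoc]
      _ = a * e ^ (n + 2) - (n + 2) • (c * e ^ (n + 1)) := by
        rw [hea, hec.eq, sub_mul, mul_assoc, mul_assoc, ← pow_succ', ← pow_succ',
          succ_nsmul _ (n + 1)]
        abel

theorem pow_mul_pow_mem_of_lt (hea : e * a = a * e - c) (hec : Commute e c)
    {I : Submodule R R} (he : e ∈ I) {k n : ℕ} (hkn : k < n) : e ^ n * a ^ k ∈ I := by
  induction k generalizing n with
  | zero =>
    obtain ⟨n, rfl⟩ := Nat.exists_eq_add_of_lt hkn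
    simpa [pow_succ] using I.smul_mem (e ^ n) he
  | succ k ih =>
    obtain ⟨n, rfl⟩ : ∃ m, n = m + 1 := Nat.exists_eq_succ_of_ne_zero (by omega)
    have hsplit : e ^ (n + 1) * a ^ (k + 1)
        = a * (e ^ (n + 1) * a ^ k) - (n + 1) • (c * (e ^ n * a ^ k)) := by
      rw [pow_succ' a k, ← mul_assoc, pow_succ_mul_of_mul_eq_sub hea hec, sub_mul, smul_mul_assoc,
        mul_assoc, mul_assoc]
    rw [hsplit]
    exact I.sub_mem (I.smul_mem a (ih (by omega))) (I.nsmul_mem (I.smul_mem c (ih (by omega))) _)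

end CommutatorPowers

theorem xg_mul_sub_mul (i j : Fin 3) (m p : ℤ) :
    xg i m * xg j p - xg j p * xg i m
      = UniversalEnvelopingAlgebra.ι ℂ ((LaurentPolynomial.T (m + p) : A) ⊗ₜ[ℂ] ⁅en i, en j⁆) := by
  rw [← Ring.lie_def, xg, xg, ← LieHom.map_lie, nx, nx, LieAlgebra.ExtendScalars.bracket_tmul,
    ← LaurentPolynomial.T_add]

theorem lie_en_one_zero : ⁅en 1, en 0⁆ = -en 2 := by
  ext1
  simp [en, Egen, Ring.lie_def]

theorem lie_en_one_two : ⁅en 1, en 2⁆ = 0 := by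
  ext1
  simp [en, Egen, Ring.lie_def]

theorem xg_one_zero_mul_xg_zero :
    xg 1 0 * xg 0 (-1) = xg 0 (-1) * xg 1 0 - xg 2 (-1) := by
  have hc : xg 2 (-1) = -(xg 1 0 * xg 0 (-1) - xg 0 (-1) * xg 1 0) := by
    rw [xg_mul_sub_mul, lie_en_one_zero, TensorProduct.tmul_neg, map_neg, neg_neg, zero_add]
    rfl
  rw [hc]
  abel

theorem commute_xg_one_xg_two (m p : ℤ) : Commute (xg 1 m) (xg 2 p) := by
  rw [Commute, SemiconjBy, ← sub_eq_zero, xg_mul_sub_mul, lie_en_one_two,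
    TensorProduct.tmul_zero, map_zero]

theorem xg_mem_nplusIdeal (i : Fin 3) {m : ℤ} (hm : 0 ≤ m) : xg i m ∈ nplusIdeal :=
  Submodule.subset_span ⟨i, m, hm, rfl⟩

/-- for every k₁ ∈ ℕ, x_{α₂}(0)^{k₁+1}·x_{α₁}(−1)^{k₁} ∈ U(𝔫̄)·𝔫̄₊. -/
theorem statement18 (k1 : ℕ) :
    xg 1 0 ^ (k1 + 1) * xg 0 (-1) ^ k1 ∈ nplusIdeal :=
  pow_mul_pow_mem_of_lt xg_one_zero_mul_xg_zero (commute_xg_one_xg_two 0 (-1))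
    (xg_mem_nplusIdeal 1 le_rfl) k1.lt_succ_self

end PrincipalSubspaceSL3
end
end
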